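/- arXiv:1807.07341 — 2 statements merged into one kernel-verified Lean document; each statement's English description precedes it below -/
import Mathlib

section
/- For every real p > 2 there exists a constant c > 0 depending only on p such that for all sufficiently large X, ∫_0^1 |M_τ(α)|^p dα ≥ c · X^{p-1} (log X)^p. -/
open Finset

/-- `e(x) = e^{2πix}`. -/
noncomputable def eFun (x : ℝ) : ℂ := Complex.exp (2 * Real.pi * Complex.I * x)

/-- The divisor function `τ(n)`. -/
def tau (n : ℕ) : ℕ := n.divisors.card

/-- The exponential sum `M_τ(α) = Σ_{n ≤ X} τ(n) e(nα)` (sum over positive integers `n ≤ X`). -/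
noncomputable def Mtau (X : ℝ) (α : ℝ) : ℂ :=
  ∑ n ∈ Finset.Icc 1 ⌊X⌋₊, (tau n : ℂ) * eFun (n * α)

/-! On the arc `0 ≤ α ≤ 1/(6X)` every phase satisfies `cos (2π n α) ≥ 1/2`, so
`‖M_τ(α)‖ ≥ ½ ∑_{n ≤ X} τ(n) ≫ X log X`, the last step by `∑_{n ≤ N} τ(n) = ∑_{d ≤ N} ⌊N/d⌋` and the
harmonic bound. Integrating the `p`-th power over this arc of length `≍ 1/X` already gives
`X^{p-1} (log X)^p`. -/

open Real

lemma sum_tau_eq_sum_div (N : ℕ) : ∑ n ∈ Icc 1 N, tau n = ∑ d ∈ Icc 1 N, N / d := by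
  have h := ArithmeticFunction.sum_Ioc_sigma0_eq_sum_div N
  rw [← Icc_add_one_left_eq_Ioc, zero_add] at h
  simpa [tau, ← ArithmeticFunction.sigma_zero_apply] using h

lemma cast_div_le_two_mul_div {N d : ℕ} (hd : 0 < d) (hdN : d ≤ N) :
    (N / d : ℝ) ≤ 2 * (N / d : ℕ) := by
  have hq : 1 ≤ N / d := (Nat.one_le_div_iff hd).2 hdN
  have hN : N < 2 * (N / d) * d := by nlinarith [Nat.lt_div_mul_add (a := N) hd]
  rw [div_le_iff₀ (by exact_mod_cast hd)]
  exact_mod_cast hN.le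

lemma mul_log_succ_div_two_le_sum_tau (N : ℕ) :
    N * log (N + 1) / 2 ≤ ∑ n ∈ Icc 1 N, (tau n : ℝ) := by
  have hharm : log (N + 1) ≤ ∑ d ∈ Icc 1 N, (d : ℝ)⁻¹ := by
    simpa [harmonic_eq_sum_Icc] using log_add_one_le_harmonic N
  calc N * log (N + 1) / 2 ≤ ∑ d ∈ Icc 1 N, (N / d : ℝ) / 2 := by
        simp_rw [div_eq_mul_inv (N : ℝ), ← sum_div, ← mul_sum]
        gcongr
    _ ≤ ∑ d ∈ Icc 1 N, ((N / d : ℕ) : ℝ) := by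
        refine sum_le_sum fun d hd => ?_
        rw [mem_Icc] at hd
        linarith [cast_div_le_two_mul_div (N := N) hd.1 hd.2]
    _ = ∑ n ∈ Icc 1 N, (tau n : ℝ) := by exact_mod_cast (sum_tau_eq_sum_div N).symm

lemma mul_log_div_four_le_sum_tau {X : ℝ} (hX : 1 ≤ X) :
    X * log X / 4 ≤ ∑ n ∈ Icc 1 ⌊X⌋₊, (tau n : ℝ) := by
  have hfloor : X < ⌊X⌋₊ + 1 := Nat.lt_floor_add_one X
  have hhalf : X / 2 ≤ ⌊X⌋₊ := by
    have : (1 : ℝ) ≤ ⌊X⌋₊ := by exact_mod_cast Nat.one_le_floor_iff X |>.2 hX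
    linarith
  have hlog : log X ≤ log (⌊X⌋₊ + 1) := log_le_log (by linarith) hfloor.le
  calc X * log X / 4 ≤ ⌊X⌋₊ * log (⌊X⌋₊ + 1) / 2 := by
        nlinarith [log_nonneg hX]
    _ ≤ _ := mul_log_succ_div_two_le_sum_tau _

lemma half_le_cos_two_pi_mul {x : ℝ} (hx : |x| ≤ 1 / 6) : 1 / 2 ≤ cos (2 * π * x) := by
  rw [← cos_abs, abs_mul, abs_of_pos (by positivity : 0 < 2 * π), ← cos_pi_div_three]
  apply cos_le_cos_of_nonneg_of_le_pi (by positivity) (by linarith [pi_pos])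
  nlinarith [pi_pos]

lemma re_eFun (x : ℝ) : (eFun x).re = cos (2 * π * x) := by
  rw [eFun, show 2 * (π : ℂ) * Complex.I * x = (2 * π * x : ℝ) * Complex.I by push_cast; ring,
    Complex.exp_ofReal_mul_I_re]

lemma sum_div_two_le_norm_sum_mul_eFun {s : Finset ℕ} {a : ℕ → ℝ} (ha : ∀ n ∈ s, 0 ≤ a n)
    {α : ℝ} (hα : ∀ n ∈ s, |n * α| ≤ 1 / 6) :
    (∑ n ∈ s, a n) / 2 ≤ ‖∑ n ∈ s, (a n : ℂ) * eFun (n * α)‖ := by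
  refine le_trans ?_ (Complex.re_le_norm _)
  rw [Complex.re_sum, sum_div]
  refine sum_le_sum fun n hn => ?_
  rw [Complex.re_ofReal_mul, re_eFun]
  nlinarith [ha n hn, half_le_cos_two_pi_mul (hα n hn)]

lemma sum_tau_div_two_le_norm_Mtau {X α : ℝ} (hα₀ : 0 ≤ α) (hα : α ≤ 1 / (6 * X)) :
    (∑ n ∈ Icc 1 ⌊X⌋₊, (tau n : ℝ)) / 2 ≤ ‖Mtau X α‖ := by
  have hα' : ∀ n ∈ Icc 1 ⌊X⌋₊, |(n : ℝ) * α| ≤ 1 / 6 := by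
    intro n hn
    obtain ⟨hn₁, hnN⟩ := mem_Icc.1 hn
    have hX : 1 ≤ X := Nat.floor_pos.1 (hn₁.trans hnN)
    have hnX : (n : ℝ) ≤ X := (Nat.cast_le.2 hnN).trans (Nat.floor_le (by positivity))
    rw [abs_of_nonneg (mul_nonneg (by positivity) hα₀)]
    calc (n : ℝ) * α ≤ X * (1 / (6 * X)) := by gcongr
      _ = 1 / 6 := by field_simp
  simpa [Mtau] using sum_div_two_le_norm_sum_mul_eFun (a := fun n => (tau n : ℝ))
    (fun n _ => Nat.cast_nonneg _) hα'

lemma continuous_Mtau (X : ℝ) : Continuous (Mtau X) := by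
  unfold Mtau eFun
  fun_prop

lemma sub_mul_le_integral_of_forall_le {f : ℝ → ℝ} {a b c m : ℝ} (hac : a ≤ c) (hcb : c ≤ b)
    (hf : IntervalIntegrable f MeasureTheory.volume a b) (hf₀ : ∀ x ∈ Set.Icc a b, 0 ≤ f x)
    (hm : ∀ x ∈ Set.Icc a c, m ≤ f x) :
    (c - a) * m ≤ ∫ x in a..b, f x := by
  have hfac : IntervalIntegrable f MeasureTheory.volume a c :=
    hf.mono_set (by rw [Set.uIcc_of_le hac, Set.uIcc_of_le (hac.trans hcb)]; gcongr)
  have hfcb : IntervalIntegrable f MeasureTheory.volume c b :=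
    hf.mono_set (by rw [Set.uIcc_of_le hcb, Set.uIcc_of_le (hac.trans hcb)]; gcongr)
  rw [← intervalIntegral.integral_add_adjacent_intervals hfac hfcb]
  have hnear : (c - a) * m ≤ ∫ x in a..c, f x := by
    simpa using intervalIntegral.integral_mono_on hac intervalIntegrable_const hfac hm
  have hfar : 0 ≤ ∫ x in c..b, f x :=
    intervalIntegral.integral_nonneg hcb fun x hx => hf₀ x ⟨hac.trans hx.1, hx.2⟩
  linarith

theorem divisor_exponential_sum_moment_lower (p : ℝ) (hp : 2 < p) :
    ∃ c : ℝ, 0 < c ∧ ∃ X₀ : ℝ, ∀ X : ℝ, X₀ ≤ X →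
      c * X ^ (p - 1) * Real.log X ^ p
        ≤ ∫ α in (0:ℝ)..1, ‖Mtau X α‖ ^ p := by
  refine ⟨(6 * 8 ^ p)⁻¹, by positivity, 1, fun X hX => ?_⟩
  have hX₀ : 0 < X := by linarith
  have hlog : 0 ≤ log X := log_nonneg hX
  have hδ : 1 / (6 * X) ≤ 1 := by rw [div_le_one (by positivity)]; linarith
  have hint : IntervalIntegrable (fun α => ‖Mtau X α‖ ^ p) MeasureTheory.volume 0 1 :=
    ((continuous_Mtau X).norm.rpow_const fun _ => Or.inr (by linarith)).intervalIntegrable _ _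
  have hnear : ∀ α ∈ Set.Icc 0 (1 / (6 * X)), (X * log X / 8) ^ p ≤ ‖Mtau X α‖ ^ p := by
    intro α hα
    have hS := mul_log_div_four_le_sum_tau hX
    have hM := sum_tau_div_two_le_norm_Mtau hα.1 hα.2
    exact rpow_le_rpow (by positivity) (by linarith) (by linarith)
  calc (6 * 8 ^ p)⁻¹ * X ^ (p - 1) * log X ^ p = (1 / (6 * X) - 0) * (X * log X / 8) ^ p := by
        rw [sub_zero, div_rpow (by positivity) (by norm_num), mul_rpow hX₀.le hlog,
          rpow_sub_one hX₀.ne']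
        field_simp
    _ ≤ _ := sub_mul_le_integral_of_forall_le (by positivity) hδ hint (fun _ _ => by positivity)
        hnear
end

section
/- For every positive integer s, as X → ∞ (X a positive integer), the number of 2s-tuples (x_1, …, x_s, y_1, …, y_s) of integers with 1 ≤ x_i, y_i ≤ X and x_1 + ⋯ + x_s = y_1 + ⋯ + y_s is asymptotic to C_s · X^{2s−1} for some constant C_s > 0 depending only on s. -/
/-!
Orthogonality of `θ ↦ e(mθ)` over a period turns the count into the moment
`∫_{-1/2}^{1/2} |D_X(θ)|^{2s} dθ` of `D_X(θ) = ∑_{x=1}^{X} e(xθ)`, whose modulus is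
`|sin(πXθ) / sin(πθ)|`. After the substitution `θ = u / X` the integrand
`(|D_X(u/X)| / X)^{2s}` tends pointwise to `sinc(πu)^{2s}`, and Jordan's inequality
`|sinc x| ≥ 2/π` on `[-π/2, π/2]` dominates it by `2 / (1 + u²)`. Dominated convergence then
gives `tupleCount s X / X^{2s-1} → ∫ sinc(πu)^{2s} du`, which is positive.
-/

open Finset Filter

/-- The number of `2s`-tuples `(x, y)` with entries in `{1, …, X}` and equal coordinate sums. -/
def tupleCount (s X : ℕ) : ℕ :=
  (((Fintype.piFinset fun _ : Fin s => Finset.Icc 1 X) ×ˢ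
      (Fintype.piFinset fun _ : Fin s => Finset.Icc 1 X)).filter
    fun xy => ∑ i, xy.1 i = ∑ i, xy.2 i).card

open Real MeasureTheory Topology
open scoped FourierTransform ComplexConjugate

lemma fourierChar_eq_exp (t : ℝ) : (𝐞 t : ℂ) = Complex.exp (2 * π * t * Complex.I) := by
  rw [Real.fourierChar_apply]; push_cast; ring_nf

lemma integral_fourierChar_intCast_mul (a : ℝ) (m : ℤ) :
    ∫ θ in a..a + 1, (𝐞 (m * θ) : ℂ) = if m = 0 then 1 else 0 := by
  split_ifs with hm
  · simp [hm]
  have hc : (2 * π * m * Complex.I : ℂ) ≠ 0 := by simp [Real.pi_ne_zero, hm]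
  simp_rw [fourierChar_eq_exp, Complex.ofReal_mul, Complex.ofReal_intCast,
    show ∀ θ : ℝ, (2 * π * (m * θ) * Complex.I : ℂ) = 2 * π * m * Complex.I * θ from
      fun θ => by ring]
  have hperiod : Complex.exp (2 * π * m * Complex.I) = 1 := by
    simpa [mul_comm, mul_assoc, mul_left_comm] using Complex.exp_int_mul_two_pi_mul_I m
  rw [integral_exp_mul_complex hc, Complex.ofReal_add, Complex.ofReal_one, mul_add, mul_one,
    Complex.exp_add, hperiod, mul_one, sub_self, zero_div]

lemma fourierChar_sum {ι : Type*} (s : Finset ι) (f : ι → ℝ) :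
    (𝐞 (∑ i ∈ s, f i) : ℂ) = ∏ i ∈ s, (𝐞 (f i) : ℂ) := by
  induction s using Finset.cons_induction with
  | empty => simp
  | cons i s hi ih => simp [sum_cons, prod_cons, AddChar.map_add_eq_mul, ih]

lemma norm_fourierChar_sub_one (t : ℝ) : ‖(𝐞 t : ℂ) - 1‖ = 2 * |sin (π * t)| := by
  rw [Real.fourierChar_apply, mul_comm, Complex.norm_exp_I_mul_ofReal_sub_one, norm_mul,
    Real.norm_two, Real.norm_eq_abs]
  ring_nf

noncomputable def expSum (A : Finset ℕ) (θ : ℝ) : ℂ := ∑ a ∈ A, 𝐞 (a * θ)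

lemma continuous_expSum (A : Finset ℕ) : Continuous (expSum A) := by
  unfold expSum; fun_prop

lemma expSum_zero (A : Finset ℕ) : expSum A 0 = #A := by
  simp [expSum]

lemma norm_expSum_le (A : Finset ℕ) (θ : ℝ) : ‖expSum A θ‖ ≤ #A :=
  (norm_sum_le _ _).trans (by simp [Circle.norm_coe])

lemma conj_expSum (A : Finset ℕ) (θ : ℝ) : conj (expSum A θ) = expSum A (-θ) := by
  simp only [expSum, map_sum, ← Circle.coe_inv_eq_conj, ← AddChar.map_neg_eq_inv, mul_neg]

lemma expSum_pow (A : Finset ℕ) (s : ℕ) (θ : ℝ) :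
    expSum A θ ^ s =
      ∑ p ∈ Fintype.piFinset fun _ : Fin s => A, (𝐞 ((∑ i, (p i : ℝ)) * θ) : ℂ) := by
  rw [expSum, ← Fin.prod_const, prod_univ_sum]
  refine sum_congr rfl fun p _ => ?_
  rw [sum_mul, fourierChar_sum]

lemma ofReal_norm_expSum_pow (A : Finset ℕ) (s : ℕ) (θ : ℝ) :
    ((‖expSum A θ‖ ^ (2 * s) : ℝ) : ℂ) =
      ∑ xy ∈ (Fintype.piFinset fun _ : Fin s => A) ×ˢ (Fintype.piFinset fun _ : Fin s => A),
        (𝐞 (((∑ i, (xy.1 i : ℤ) - ∑ i, (xy.2 i : ℤ) : ℤ) : ℝ) * θ) : ℂ) := by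
  rw [pow_mul, Complex.ofReal_pow, Complex.ofReal_pow, ← Complex.mul_conj', mul_pow,
    conj_expSum, expSum_pow, expSum_pow, sum_mul_sum, sum_product]
  refine sum_congr rfl fun x _ => sum_congr rfl fun y _ => ?_
  rw [← Circle.coe_mul, ← AddChar.map_add_eq_mul]
  push_cast
  ring_nf

lemma card_filter_sum_eq_eq_integral (A : Finset ℕ) (s : ℕ) (a : ℝ) :
    ((((Fintype.piFinset fun _ : Fin s => A) ×ˢ (Fintype.piFinset fun _ : Fin s => A)).filter
      fun xy => ∑ i, xy.1 i = ∑ i, xy.2 i).card : ℝ) =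
      ∫ θ in a..a + 1, ‖expSum A θ‖ ^ (2 * s) := by
  apply Complex.ofReal_injective
  rw [← intervalIntegral.integral_ofReal]
  simp_rw [ofReal_norm_expSum_pow]
  rw [intervalIntegral.integral_finsetSum fun _ _ =>
    (by fun_prop : Continuous _).intervalIntegrable _ _]
  simp_rw [integral_fourierChar_intCast_mul, sub_eq_zero, ← Nat.cast_sum, Nat.cast_inj]
  rw [sum_boole]
  norm_cast

lemma norm_expSum_Icc (X : ℕ) {θ : ℝ} (h : sin (π * θ) ≠ 0) :
    ‖expSum (Icc 1 X) θ‖ = |sin (π * (X * θ))| / |sin (π * θ)| := by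
  have hne : (𝐞 θ : ℂ) ≠ 1 := by
    rw [← sub_ne_zero, ← norm_ne_zero_iff, norm_fourierChar_sub_one]
    positivity
  have hgeom : expSum (Icc 1 X) θ = 𝐞 θ * (((𝐞 θ : ℂ) ^ X - 1) / (𝐞 θ - 1)) := by
    rw [← geom_sum_eq hne, mul_sum, expSum, ← Ico_add_one_right_eq_Icc, sum_Ico_eq_sum_range]
    refine sum_congr rfl fun i _ => ?_
    rw [← pow_succ', ← Circle.coe_pow, ← AddChar.map_nsmul_eq_pow, nsmul_eq_mul]
    push_cast
    ring_nf
  rw [hgeom, norm_mul, norm_div, Circle.norm_coe, one_mul, ← Circle.coe_pow,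
    ← AddChar.map_nsmul_eq_pow, nsmul_eq_mul, norm_fourierChar_sub_one,
    norm_fourierChar_sub_one, mul_div_mul_left _ _ two_ne_zero]

lemma two_div_pi_le_abs_sinc {x : ℝ} (hx : |x| ≤ π / 2) : 2 / π ≤ |sinc x| := by
  rcases eq_or_ne x 0 with rfl | hx0
  · rw [sinc_zero, abs_one, div_le_one pi_pos]
    linarith [pi_gt_three]
  rw [sinc_of_ne_zero hx0, abs_div, abs_sin_eq_sin_abs_of_abs_le_pi (by linarith [pi_pos]),
    le_div_iff₀ (abs_pos.mpr hx0)]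
  exact mul_le_sin (abs_nonneg x) hx

lemma abs_mul_abs_sinc_pi_mul_le (u : ℝ) : |u| * |sinc (π * u)| ≤ 1 / π := by
  rcases eq_or_ne u 0 with rfl | hu0
  · simp [pi_pos.le]
  have hcancel : |u| * (|sin (π * u)| / (π * |u|)) = |sin (π * u)| / π := by
    field_simp
  rw [sinc_of_ne_zero (by positivity), abs_div, abs_mul, abs_of_pos pi_pos, hcancel]
  gcongr
  exact abs_sin_le_one _

lemma pow_le_two_mul_inv_one_add_sq {b u : ℝ} {s : ℕ} (hb₀ : 0 ≤ b) (hb₁ : b ≤ 1)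
    (hbu : |u| * b ≤ 1) (hs : 0 < s) : b ^ (2 * s) ≤ 2 * (1 + u ^ 2)⁻¹ := by
  have hsq : b ^ 2 * (1 + u ^ 2) ≤ 2 := by
    have h1 : b ^ 2 ≤ 1 := pow_le_one₀ hb₀ hb₁
    have h2 : (|u| * b) ^ 2 ≤ 1 := pow_le_one₀ (by positivity) hbu
    nlinarith [sq_abs u]
  calc b ^ (2 * s) ≤ b ^ 2 := pow_le_pow_of_le_one hb₀ hb₁ (by omega)
    _ ≤ 2 * (1 + u ^ 2)⁻¹ := by
      rw [← div_eq_mul_inv, le_div_iff₀ (by positivity)]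
      exact hsq

lemma abs_pi_mul_div_le {X : ℕ} (hX : 0 < X) {u : ℝ} (hu : |u| ≤ X / 2) :
    |π * (u / X)| ≤ π / 2 := by
  have hX' : (0 : ℝ) < X := Nat.cast_pos.mpr hX
  have : |u| / X ≤ 1 / 2 := by rw [div_le_iff₀ hX']; linarith
  rw [abs_mul, abs_of_pos pi_pos, abs_div, Nat.abs_cast]
  nlinarith [pi_pos]

lemma norm_expSum_Icc_div {X : ℕ} (hX : 0 < X) {u : ℝ} (hu : |u| ≤ X / 2) :
    ‖expSum (Icc 1 X) (u / X)‖ / X = |sinc (π * u)| / |sinc (π * (u / X))| := by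
  have hX' : (0 : ℝ) < X := Nat.cast_pos.mpr hX
  rcases eq_or_ne u 0 with rfl | hu0
  · simp [expSum_zero, hX'.ne']
  have hθ0 : π * (u / X) ≠ 0 := by positivity
  have hsin : sin (π * (u / X)) ≠ 0 := by
    have := two_div_pi_le_abs_sinc (abs_pi_mul_div_le hX hu)
    contrapose! this
    simp [sinc_of_ne_zero hθ0, this, pi_pos]
  rw [norm_expSum_Icc X hsin, sinc_of_ne_zero hθ0, sinc_of_ne_zero (by positivity),
    mul_div_cancel₀ _ hX'.ne', abs_div, abs_div, abs_mul, abs_mul, abs_div, Nat.abs_cast]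
  field_simp

lemma abs_mul_norm_expSum_Icc_div_le_one {X : ℕ} (hX : 0 < X) {u : ℝ} (hu : |u| ≤ X / 2) :
    |u| * (‖expSum (Icc 1 X) (u / X)‖ / X) ≤ 1 := by
  have hden := two_div_pi_le_abs_sinc (abs_pi_mul_div_le hX hu)
  have h2π : 1 / π ≤ 2 / π := by gcongr; norm_num
  rw [norm_expSum_Icc_div hX hu, mul_div_assoc', div_le_one (by linarith [div_pos two_pos pi_pos])]
  linarith [abs_mul_abs_sinc_pi_mul_le u]

/-- The substitution `θ = u / X` applied to the period `(-1/2, 1/2]`, normalised by `X`. -/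
noncomputable def rescaledPower (s X : ℕ) : ℝ → ℝ :=
  (Set.Ioc (-(X / 2 : ℝ)) (X / 2)).indicator
    fun u => (‖expSum (Icc 1 X) (u / X)‖ / X) ^ (2 * s)

lemma integral_rescaledPower {s X : ℕ} (hs : 0 < s) (hX : 0 < X) :
    ∫ u, rescaledPower s X u = tupleCount s X / (X : ℝ) ^ (2 * s - 1) := by
  have hX' : (0 : ℝ) < X := Nat.cast_pos.mpr hX
  have hlow : -((X : ℝ) / 2) / X = -(1 / 2) := by field_simp
  have hup : (X : ℝ) / 2 / X = -(1 / 2) + 1 := by field_simp; norm_num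
  rw [rescaledPower, integral_indicator measurableSet_Ioc,
    ← intervalIntegral.integral_of_le (by linarith), tupleCount,
    card_filter_sum_eq_eq_integral _ _ (-(1 / 2))]
  simp_rw [div_pow]
  rw [intervalIntegral.integral_div,
    intervalIntegral.integral_comp_div (fun θ => ‖expSum (Icc 1 X) θ‖ ^ (2 * s)) hX'.ne',
    hlow, hup, smul_eq_mul, div_eq_div_iff (by positivity) (by positivity),
    ← pow_sub_one_mul (by omega : 2 * s ≠ 0)]
  ring

lemma norm_rescaledPower_le {s : ℕ} (hs : 0 < s) (X : ℕ) (u : ℝ) :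
    ‖rescaledPower s X u‖ ≤ 2 * (1 + u ^ 2)⁻¹ := by
  rw [rescaledPower, norm_indicator_eq_indicator_norm, Set.indicator_apply]
  split_ifs with hu
  · have hX : 0 < X := by
      rw [Set.mem_Ioc] at hu
      exact_mod_cast (by linarith : (0 : ℝ) < X)
    have hu' : |u| ≤ X / 2 := abs_le.mpr ⟨hu.1.le, hu.2⟩
    rw [norm_pow, Real.norm_of_nonneg (by positivity)]
    refine pow_le_two_mul_inv_one_add_sq (by positivity) ?_
      (abs_mul_norm_expSum_Icc_div_le_one hX hu') hs
    rw [div_le_one (Nat.cast_pos.mpr hX)]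
    simpa using norm_expSum_le (Icc 1 X) (u / X)
  · positivity

lemma tendsto_rescaledPower (s : ℕ) (u : ℝ) :
    Tendsto (fun X => rescaledPower s X u) atTop (𝓝 (sinc (π * u) ^ (2 * s))) := by
  have hsinc : Tendsto (fun X : ℕ => sinc (π * (u / X))) atTop (𝓝 1) := by
    rw [← sinc_zero, ← mul_zero π]
    exact (continuous_sinc.tendsto _).comp
      ((tendsto_const_div_atTop_nhds_zero_nat u).const_mul π)
  have hlim : Tendsto (fun X : ℕ => (|sinc (π * u)| / |sinc (π * (u / X))|) ^ (2 * s)) atTop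
      (𝓝 (sinc (π * u) ^ (2 * s))) := by
    simpa [(even_two_mul s).pow_abs] using
      ((tendsto_const_nhds (x := |sinc (π * u)|)).div hsinc.abs (by simp)).pow (2 * s)
  refine hlim.congr' ?_
  filter_upwards [eventually_gt_atTop 0,
    (tendsto_natCast_atTop_atTop (R := ℝ)).eventually_gt_atTop (2 * |u|)] with X hX hXu
  rw [rescaledPower, Set.indicator_of_mem, norm_expSum_Icc_div hX (by linarith)]
  exact ⟨by linarith [neg_abs_le u], by linarith [le_abs_self u]⟩

lemma integrable_sinc_pow {s : ℕ} (hs : 0 < s) :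
    Integrable fun u => sinc (π * u) ^ (2 * s) := by
  refine (integrable_inv_one_add_sq.const_mul 2).mono'
    (by fun_prop : Continuous fun u => sinc (π * u) ^ (2 * s)).aestronglyMeasurable
    (ae_of_all _ fun u => ?_)
  rw [norm_pow, Real.norm_eq_abs]
  refine pow_le_two_mul_inv_one_add_sq (abs_nonneg _) (abs_sinc_le_one _) ?_ hs
  calc |u| * |sinc (π * u)| ≤ 1 / π := abs_mul_abs_sinc_pi_mul_le u
    _ ≤ 1 := by rw [div_le_one pi_pos]; linarith [pi_gt_three]

lemma integral_sinc_pow_pos {s : ℕ} (hs : 0 < s) :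
    0 < ∫ u, sinc (π * u) ^ (2 * s) :=
  integral_pos_of_integrable_nonneg_nonzero (x := 0) (by fun_prop) (integrable_sinc_pow hs)
    (fun u => (even_two_mul s).pow_nonneg _) (by simp)

lemma tendsto_tupleCount_div_pow {s : ℕ} (hs : 0 < s) :
    Tendsto (fun X : ℕ => (tupleCount s X : ℝ) / (X : ℝ) ^ (2 * s - 1)) atTop
      (𝓝 (∫ u, sinc (π * u) ^ (2 * s))) := by
  have hmeas (X : ℕ) : AEStronglyMeasurable (rescaledPower s X) :=
    ((continuous_expSum _).comp (by fun_prop) |>.norm.div_const _ |>.pow _).aestronglyMeasurable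
      |>.indicator measurableSet_Ioc
  refine (tendsto_integral_of_dominated_convergence _ hmeas
    (integrable_inv_one_add_sq.const_mul 2)
    (fun X => ae_of_all _ (norm_rescaledPower_le hs X))
    (ae_of_all _ (tendsto_rescaledPower s))).congr' ?_
  filter_upwards [eventually_gt_atTop 0] with X hX using integral_rescaledPower hs hX

theorem tupleCount_asymptotic (s : ℕ) (hs : 0 < s) :
    ∃ C : ℝ, 0 < C ∧
      Tendsto (fun X : ℕ => (tupleCount s X : ℝ) / (C * (X : ℝ) ^ (2 * s - 1)))
        atTop (nhds 1) := by
  have hC := integral_sinc_pow_pos hs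
  refine ⟨_, hC, ?_⟩
  have h := (tendsto_tupleCount_div_pow hs).div_const (∫ u, sinc (π * u) ^ (2 * s))
  rw [div_self hC.ne'] at h
  exact h.congr fun X => by rw [div_div, mul_comm]
end
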